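/- (Quantum Singleton bound for quotient space quantum codes) Let n, k, l, d be natural numbers with d ≥ 1, n ≡ k (mod 2), and l even. Let C be an 𝔽₂-subspace of V with C ⊆ C^⊥ₛ and dim_{𝔽₂} C = n − k. Assume either (a) k ≥ 1 and d ≤ d_m := min{w_Q(v) : v ∈ C^⊥ₛ \ C}, or (b) k = 0 and l ≥ 2. Let C(d−1) := {c ∈ C : w_Q(c) ≤ d−1}. Suppose Ω ⊆ V/C^⊥ₛ is a set of cosets with |Ω| = 2^l whose pairwise quotient distances are all ≥ d, and such that all elements of the cosets in Ω lie in a single coset of C(d−1)^⊥ₛ in V. Then n ≥ k + l + 2d − 2. -/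

import Mathlib

open Finset

/-- `V = 𝔽₂ⁿ × 𝔽₂ⁿ`, elements written `(a|b)`. -/
abbrev Vn (n : ℕ) : Type := (Fin n → ZMod 2) × (Fin n → ZMod 2)

/-- The symplectic inner product `((a|b),(a'|b'))ₛ = a·b' + a'·b`. -/
def symp {n : ℕ} (v w : Vn n) : ZMod 2 :=
  (∑ i, v.1 i * w.2 i) + (∑ i, w.1 i * v.2 i)

lemma symp_add_left {n : ℕ} (a b s : Vn n) : symp (a + b) s = symp a s + symp b s := by
  simp only [symp, Prod.fst_add, Prod.snd_add, Pi.add_apply, add_mul, mul_add,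
    Finset.sum_add_distrib]
  ring

lemma symp_smul_left {n : ℕ} (c : ZMod 2) (v s : Vn n) : symp (c • v) s = c * symp v s := by
  simp only [symp, Prod.smul_fst, Prod.smul_snd, Pi.smul_apply, smul_eq_mul, mul_add,
    Finset.mul_sum]
  congr 1
  · exact Finset.sum_congr rfl fun i _ => by ring
  · exact Finset.sum_congr rfl fun i _ => by ring

/-- The symplectic orthogonal `S^⊥ₛ` of a subset `S ⊆ V`, as an `𝔽₂`-subspace of `V`. -/
def sympOrtho {n : ℕ} (S : Set (Vn n)) : Submodule (ZMod 2) (Vn n) where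
  carrier := {v | ∀ s ∈ S, symp v s = 0}
  zero_mem' := by intro s hs; simp [symp]
  add_mem' := by
    intro a b ha hb s hs
    rw [Set.mem_setOf_eq] at *
    rw [symp_add_left, ha s hs, hb s hs, add_zero]
  smul_mem' := by
    intro c v hv s hs
    rw [Set.mem_setOf_eq] at *
    rw [symp_smul_left, hv s hs, mul_zero]

/-- `ε : 𝔽₂ → ℂ`, `ε(0) = 1`, `ε(1) = -1`. -/
def eps (x : ZMod 2) : ℂ := if x = 0 then 1 else -1

/-- Quantum weight of `(a|b)`: number of positions `i` with `(aᵢ,bᵢ) ≠ (0,0)`. -/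
def wQ {n : ℕ} (v : Vn n) : ℕ :=
  (Finset.univ.filter fun i => (v.1 i, v.2 i) ≠ ((0 : ZMod 2), (0 : ZMod 2))).card

/-- Quotient minimum norm `‖x̄‖ = min_{v ∈ x̄} w_Q(v)` on `V ⧸ H`. -/
noncomputable def qnorm {n : ℕ} (H : Submodule (ZMod 2) (Vn n)) (x : Vn n ⧸ H) : ℕ :=
  sInf {m | ∃ v : Vn n, (Submodule.Quotient.mk v : Vn n ⧸ H) = x ∧ wQ v = m}

/-- Quotient distance `d(x̄,ȳ) = ‖x̄ - ȳ‖` on `V ⧸ H`. -/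
noncomputable def qdist {n : ℕ} (H : Submodule (ZMod 2) (Vn n)) (x y : Vn n ⧸ H) : ℕ :=
  qnorm H (x - y)

/-- The operator `W(a,b)` acting on functions `𝔽₂ⁿ → ℂ`: `(W(a,b)f)(x) = ε(b·x)·f(x+a)`. -/
def Wop {n : ℕ} (a b : Fin n → ZMod 2) (f : (Fin n → ZMod 2) → ℂ) : (Fin n → ZMod 2) → ℂ :=
  fun x => eps (∑ i, b i * x i) * f (x + a)

/-- The joint eigenspace `Q(i)` of the operators `W(c₁,c₂)`, `(c₁|c₂) ∈ C`. -/
def Qset {n : ℕ} (C : Submodule (ZMod 2) (Vn n)) (i : Vn n) : Set ((Fin n → ZMod 2) → ℂ) :=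
  {f | ∀ c ∈ C, ∀ x, Wop c.1 c.2 f x = eps (symp i c) * f x}

/-!
The proof is linear algebra over `𝔽₂`. Write `W` for the span of `C(d-1)`, `N = W^⊥ₛ ⊇ C^⊥ₛ`, and
`K_T` for the vectors supported on a set `T` of `t ≤ d - 1` positions. Every vector of `C^⊥ₛ + K_T`
differs from a vector of `C^⊥ₛ` by a vector of weight `≤ t < d`, so the translates of
`M = C^⊥ₛ + (K_T ∩ N)` by representatives of `Ω` are pairwise distinct and all lie in one coset
of `N`: `l + dim M ≤ dim N`. Since `C^⊥ₛ ∩ K_T = W ∩ K_T` (a low-weight vector of `C^⊥ₛ` lies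
in `C`, hence in `W`), computing `dim M` with `(K_T ∩ N)^⊥ₛ = K_{Tᶜ} + W` gives
`l + k + 2t + dim (K_{Tᶜ} ∩ W) ≤ n + dim (K_T ∩ W)`.
If `2(d-1) ≤ n`, take `T` of size `d - 1` minimising `dim (K_T ∩ W)`: a set of size `d - 1` inside
`Tᶜ` shows `dim (K_T ∩ W) ≤ dim (K_{Tᶜ} ∩ W)`, whence `k + l + 2(d-1) ≤ n`. Otherwise `T` and `Tᶜ`
can both be taken of size `≤ d - 1`, and adding the two inequalities forces `k = l = 0`.
-/

open Module Submodule

variable {n : ℕ}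

lemma symp_comm (v w : Vn n) : symp v w = symp w v :=
  add_comm _ _

lemma symp_add_right (s a b : Vn n) : symp s (a + b) = symp s a + symp s b := by
  rw [symp_comm, symp_add_left, symp_comm a, symp_comm b]

lemma symp_smul_right (c : ZMod 2) (s v : Vn n) : symp s (c • v) = c * symp s v := by
  rw [symp_comm, symp_smul_left, symp_comm]

lemma symp_single_zero (v : Vn n) (i : Fin n) : symp v (Pi.single i 1, 0) = v.2 i := by
  simp [symp, Pi.single_apply, ite_mul]

lemma symp_zero_single (v : Vn n) (i : Fin n) : symp v (0, Pi.single i 1) = v.1 i := by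
  simp [symp, Pi.single_apply, mul_ite]

variable (n) in
def sympBilin : LinearMap.BilinForm (ZMod 2) (Vn n) :=
  LinearMap.mk₂ (ZMod 2) symp symp_add_left symp_smul_left symp_add_right symp_smul_right

@[simp] lemma sympBilin_apply (v w : Vn n) : sympBilin n v w = symp v w := rfl

lemma sympBilin_nondegenerate : (sympBilin n).Nondegenerate := by
  refine LinearMap.BilinForm.Nondegenerate.ofSeparatingLeft fun v hv => ?_
  ext i
  · simpa [symp_zero_single] using hv (0, Pi.single i 1)
  · simpa [symp_single_zero] using hv (Pi.single i 1, 0)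

lemma sympOrtho_eq_orthogonal (U : Submodule (ZMod 2) (Vn n)) :
    sympOrtho (U : Set (Vn n)) = (sympBilin n).orthogonal U := by
  ext v
  simp [sympOrtho, LinearMap.BilinForm.mem_orthogonal_iff, symp_comm v]

lemma finrank_add_finrank_sympOrtho (U : Submodule (ZMod 2) (Vn n)) :
    finrank (ZMod 2) U + finrank (ZMod 2) (sympOrtho (U : Set (Vn n))) = 2 * n := by
  have hrefl : (sympBilin n).IsRefl := fun x y h => by simpa [symp_comm y x] using h
  rw [sympOrtho_eq_orthogonal, LinearMap.BilinForm.finrank_add_finrank_orthogonal hrefl,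
    LinearMap.BilinForm.orthogonal_top_eq_bot sympBilin_nondegenerate, inf_bot_eq, finrank_bot,
    add_zero, finrank_prod, finrank_fin_fun]
  ring

lemma sympOrtho_antitone : Antitone (sympOrtho (n := n)) :=
  fun _ _ h _ hv s hs => hv s (h hs)

lemma sympOrtho_span (S : Set (Vn n)) :
    sympOrtho (span (ZMod 2) S : Set (Vn n)) = sympOrtho S := by
  refine le_antisymm (sympOrtho_antitone subset_span) fun v hv s hs => ?_
  induction hs using span_induction with
  | mem x hx => exact hv x hx
  | zero => simp [symp]
  | add x y _ _ hx hy => rw [symp_add_right, hx, hy, add_zero]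
  | smul c x _ hx => rw [symp_smul_right, hx, mul_zero]

lemma sympOrtho_sup (U U' : Submodule (ZMod 2) (Vn n)) :
    sympOrtho ((U ⊔ U' : Submodule (ZMod 2) (Vn n)) : Set (Vn n)) =
      sympOrtho (U : Set (Vn n)) ⊓ sympOrtho (U' : Set (Vn n)) := by
  refine le_antisymm (le_inf (sympOrtho_antitone ?_) (sympOrtho_antitone ?_)) ?_
  · exact SetLike.coe_subset_coe.2 le_sup_left
  · exact SetLike.coe_subset_coe.2 le_sup_right
  · rintro v ⟨hU, hU'⟩ s hs
    obtain ⟨a, ha, b, hb, rfl⟩ := mem_sup.1 hs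
    rw [symp_add_right, hU a ha, hU' b hb, add_zero]

variable (n) in
def supportedOn (T : Finset (Fin n)) : Submodule (ZMod 2) (Vn n) where
  carrier := {v | ∀ i ∉ T, v.1 i = 0 ∧ v.2 i = 0}
  zero_mem' _ _ := ⟨rfl, rfl⟩
  add_mem' ha hb i hi := by simp [(ha i hi).1, (ha i hi).2, (hb i hi).1, (hb i hi).2]
  smul_mem' c v hv i hi := by simp [(hv i hi).1, (hv i hi).2]

lemma supportedOn_mono : Monotone (supportedOn n) :=
  fun _ _ h _ hv i hi => hv i fun hiT => hi (h hiT)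

lemma wQ_le_card_of_mem_supportedOn {T : Finset (Fin n)} {v : Vn n}
    (hv : v ∈ supportedOn n T) : wQ v ≤ T.card := by
  refine card_le_card fun i hi => ?_
  by_contra hiT
  simp [(hv i hiT).1, (hv i hiT).2] at hi

lemma sympOrtho_supportedOn (T : Finset (Fin n)) :
    sympOrtho (supportedOn n T : Set (Vn n)) = supportedOn n Tᶜ := by
  ext v
  refine ⟨fun hv i hi => ?_, fun hv s hs => ?_⟩
  · rw [mem_compl, not_not] at hi
    have single_mem : ∀ j ∉ T, (Pi.single i 1 : Fin n → ZMod 2) j = 0 := fun j hj =>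
      Pi.single_eq_of_ne (ne_of_mem_of_not_mem hi hj).symm 1
    constructor
    · simpa [symp_zero_single] using hv (0, Pi.single i 1) fun j hj => ⟨rfl, single_mem j hj⟩
    · simpa [symp_single_zero] using hv (Pi.single i 1, 0) fun j hj => ⟨single_mem j hj, rfl⟩
  · have vanish : ∀ i, v.1 i * s.2 i = 0 ∧ s.1 i * v.2 i = 0 := fun i => by
      by_cases hiT : i ∈ T
      · obtain ⟨h1, h2⟩ := hv i (notMem_compl.2 hiT)
        simp [h1, h2]
      · obtain ⟨h1, h2⟩ := hs i hiT
        simp [h1, h2]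
    simp [symp, fun i => (vanish i).1, fun i => (vanish i).2]

lemma finrank_supportedOn_le (T : Finset (Fin n)) :
    finrank (ZMod 2) (supportedOn n T) ≤ 2 * T.card := by
  let restrict := LinearMap.funLeft (ZMod 2) (ZMod 2) (Subtype.val : T → Fin n)
  have hinj : Function.Injective ((restrict.prodMap restrict).comp (supportedOn n T).subtype) := by
    rintro ⟨v, hv⟩ ⟨v', hv'⟩ h
    simp only [LinearMap.coe_comp, Function.comp_apply, subtype_apply, LinearMap.prodMap_apply,
      Prod.mk.injEq, funext_iff, Subtype.forall] at h
    ext i <;> by_cases hi : i ∈ T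
    exacts [h.1 i hi, (hv i hi).1.trans (hv' i hi).1.symm, h.2 i hi,
      (hv i hi).2.trans (hv' i hi).2.symm]
  have := LinearMap.finrank_le_finrank_of_injective hinj
  rwa [finrank_prod, finrank_fintype_fun_eq_card, Fintype.card_coe, ← two_mul] at this

lemma finrank_supportedOn (T : Finset (Fin n)) :
    finrank (ZMod 2) (supportedOn n T) = 2 * T.card := by
  have hsum := finrank_add_finrank_sympOrtho (supportedOn n T)
  rw [sympOrtho_supportedOn] at hsum
  have := finrank_supportedOn_le T
  have := finrank_supportedOn_le Tᶜ
  have := card_compl_add_card T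
  simp only [Fintype.card_fin] at *
  omega

lemma card_mul_card_le_card_of_sub_mem {R E ι : Type*} [Ring R] [AddCommGroup E] [Module R E]
    {M N : Submodule R E} [Finite N] (hMN : M ≤ N) (f : ι → E) (w : E)
    (hf : ∀ i, f i - w ∈ N) (hinj : ∀ i j, f i - f j ∈ M → i = j) :
    Nat.card ι * Nat.card M ≤ Nat.card N := by
  let M' := M.comap N.subtype
  let g : ι → N ⧸ M' := fun i => Submodule.Quotient.mk ⟨f i - w, hf i⟩
  have hg : Function.Injective g := fun i j hij =>
    hinj i j (by simpa [g, M', Submodule.Quotient.eq] using hij)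
  have : Finite (N ⧸ M') := Finite.of_surjective _ M'.mkQ_surjective
  rw [card_eq_card_quotient_mul_card M', Nat.card_congr (comapSubtypeEquivOfLe hMN).toEquiv,
    mul_comm (Nat.card M)]
  exact Nat.mul_le_mul_right _ (Nat.card_le_card_of_injective g hg)

lemma qnorm_mk_le (H : Submodule (ZMod 2) (Vn n)) (v : Vn n) :
    qnorm H (Submodule.Quotient.mk v) ≤ wQ v :=
  Nat.sInf_le ⟨v, rfl, rfl⟩

lemma qdist_mk_le_card_of_sub_mem_sup {H : Submodule (ZMod 2) (Vn n)} {T : Finset (Fin n)}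
    {u v : Vn n} (h : u - v ∈ H ⊔ supportedOn n T) :
    qdist H (Submodule.Quotient.mk u) (Submodule.Quotient.mk v) ≤ T.card := by
  obtain ⟨c, hc, s, hs, hcs⟩ := mem_sup.1 h
  have hmk : (Submodule.Quotient.mk (u - v) : Vn n ⧸ H) = Submodule.Quotient.mk s :=
    (Submodule.Quotient.eq H).2 (by rw [← hcs, add_sub_cancel_right]; exact hc)
  calc qdist H (Submodule.Quotient.mk u) (Submodule.Quotient.mk v)
      = qnorm H (Submodule.Quotient.mk s) := by rw [qdist, ← Submodule.Quotient.mk_sub, hmk]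
    _ ≤ wQ s := qnorm_mk_le H s
    _ ≤ T.card := wQ_le_card_of_mem_supportedOn hs

lemma packing_bound {Cp N : Submodule (ZMod 2) (Vn n)} (hCN : Cp ≤ N) (T : Finset (Fin n))
    {l : ℕ} (Ω : Set (Vn n ⧸ Cp)) (hcard : Nat.card Ω = 2 ^ l)
    (hdist : ∀ x ∈ Ω, ∀ y ∈ Ω, x ≠ y → T.card < qdist Cp x y)
    (w : Vn n) (hw : ∀ v : Vn n, (Submodule.Quotient.mk v : Vn n ⧸ Cp) ∈ Ω → v - w ∈ N) :
    l + finrank (ZMod 2) ↥(Cp ⊔ supportedOn n T ⊓ N) ≤ finrank (ZMod 2) N := by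
  choose rep hrep using fun x : Ω => Submodule.Quotient.mk_surjective Cp x
  have hinj : ∀ x y : Ω, rep x - rep y ∈ Cp ⊔ supportedOn n T ⊓ N → x = y := by
    intro x y h
    by_contra hne
    have hle := qdist_mk_le_card_of_sub_mem_sup (sup_le_sup_left inf_le_left Cp h)
    rw [hrep x, hrep y] at hle
    exact (hdist x x.2 y y.2 (Subtype.coe_ne_coe.2 hne)).not_ge hle
  have hcount := card_mul_card_le_card_of_sub_mem (sup_le hCN inf_le_right) rep w
    (fun x => hw _ (by rw [hrep x]; exact x.2)) hinj
  have hpow (U : Submodule (ZMod 2) (Vn n)) : Nat.card U = 2 ^ finrank (ZMod 2) U := by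
    rw [natCard_eq_pow_finrank (K := ZMod 2), Nat.card_zmod]
  rwa [hcard, hpow, hpow, ← pow_add, Nat.pow_le_pow_iff_right (by norm_num)] at hcount

lemma singleton_inequality {Cp W : Submodule (ZMod 2) (Vn n)} (hWC : W ≤ Cp)
    (hCW : Cp ≤ sympOrtho (W : Set (Vn n))) {T : Finset (Fin n)}
    (hlow : ∀ v ∈ Cp, wQ v ≤ T.card → v ∈ W)
    {l : ℕ} (Ω : Set (Vn n ⧸ Cp)) (hcard : Nat.card Ω = 2 ^ l)
    (hdist : ∀ x ∈ Ω, ∀ y ∈ Ω, x ≠ y → T.card < qdist Cp x y) (w : Vn n)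
    (hw : ∀ v : Vn n, (Submodule.Quotient.mk v : Vn n ⧸ Cp) ∈ Ω →
      v - w ∈ sympOrtho (W : Set (Vn n))) :
    l + finrank (ZMod 2) Cp + 2 * T.card + finrank (ZMod 2) ↥(supportedOn n Tᶜ ⊓ W)
      ≤ 2 * n + finrank (ZMod 2) ↥(supportedOn n T ⊓ W) := by
  set N := sympOrtho (W : Set (Vn n))
  have hpack := packing_bound hCW T Ω hcard hdist w hw
  have hinter : Cp ⊓ (supportedOn n T ⊓ N) = supportedOn n T ⊓ W :=
    le_antisymm
      (fun v ⟨hvC, hvT, _⟩ => ⟨hvT, hlow v hvC (wQ_le_card_of_mem_supportedOn hvT)⟩)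
      (fun v ⟨hvT, hvW⟩ => ⟨hWC hvW, hvT, hCW (hWC hvW)⟩)
  have hM := finrank_sup_add_finrank_inf_eq Cp (supportedOn n T ⊓ N)
  rw [hinter] at hM
  have hortho : supportedOn n T ⊓ N = sympOrtho ↑(supportedOn n Tᶜ ⊔ W) := by
    rw [sympOrtho_sup, sympOrtho_supportedOn, compl_compl]
  have hKN := finrank_add_finrank_sympOrtho (supportedOn n Tᶜ ⊔ W)
  rw [← hortho] at hKN
  have hKW := finrank_sup_add_finrank_inf_eq (supportedOn n Tᶜ) W
  rw [finrank_supportedOn, card_compl, Fintype.card_fin] at hKW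
  have hWN : finrank (ZMod 2) W + finrank (ZMod 2) N = 2 * n := finrank_add_finrank_sympOrtho W
  have hT : T.card ≤ n := card_le_univ T |>.trans_eq (Fintype.card_fin n)
  omega

lemma add_two_mul_le_of_forall_card_le {c e : ℕ} (a : Finset (Fin n) → ℕ) (ha : Monotone a)
    (hc : 0 < c) (h : ∀ T : Finset (Fin n), T.card ≤ e → c + 2 * T.card + a Tᶜ ≤ n + a T) :
    c + 2 * e ≤ n := by
  by_cases hen : 2 * e ≤ n
  · obtain ⟨T, hT, hmin⟩ := exists_min_image (powersetCard e univ) a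
      (powersetCard_nonempty.2 (by rw [card_univ, Fintype.card_fin]; omega))
    rw [mem_powersetCard_univ] at hT
    obtain ⟨T', hT'T, hT'⟩ := exists_subset_card_eq (s := Tᶜ) (n := e)
      (by rw [card_compl, Fintype.card_fin]; omega)
    have := hmin T' (mem_powersetCard_univ.2 hT')
    have := ha hT'T
    have := h T hT.le
    omega
  · obtain ⟨T, -, hT⟩ := exists_subset_card_eq (s := (univ : Finset (Fin n))) (n := n / 2)
      (by rw [card_univ, Fintype.card_fin]; omega)
    have hTc : Tᶜ.card = n - n / 2 := by rw [card_compl, Fintype.card_fin, hT]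
    have := h T (by omega)
    have := h Tᶜ (by omega)
    rw [compl_compl] at this
    omega

theorem quantum_singleton_bound_general (n k l d : ℕ) (hk : k ≤ n) (hd : 1 ≤ d)
    (C : Submodule (ZMod 2) (Vn n)) (hself : C ≤ sympOrtho (C : Set (Vn n)))
    (hC : Module.finrank (ZMod 2) C = n - k)
    (hcase : (1 ≤ k ∧ d ≤ sInf {w | ∃ v : Vn n,
        v ∈ sympOrtho (C : Set (Vn n)) ∧ v ∉ C ∧ wQ v = w}) ∨ (k = 0 ∧ 2 ≤ l))
    (Ω : Set (Vn n ⧸ sympOrtho (C : Set (Vn n)))) (hcard : Nat.card Ω = 2 ^ l)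
    (hdist : ∀ x ∈ Ω, ∀ y ∈ Ω, x ≠ y → d ≤ qdist (sympOrtho (C : Set (Vn n))) x y)
    (hcoset : ∃ w : Vn n, ∀ v : Vn n,
      (Submodule.Quotient.mk v : Vn n ⧸ sympOrtho (C : Set (Vn n))) ∈ Ω →
        v - w ∈ sympOrtho {c : Vn n | c ∈ C ∧ wQ c ≤ d - 1}) :
    k + l + 2 * d ≤ n + 2 := by
  obtain ⟨w, hw⟩ := hcoset
  set W := span (ZMod 2) {c : Vn n | c ∈ C ∧ wQ c ≤ d - 1}
  have hCp : finrank (ZMod 2) (sympOrtho (C : Set (Vn n))) = n + k := by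
    have := finrank_add_finrank_sympOrtho C
    omega
  have hlow : ∀ v ∈ sympOrtho (C : Set (Vn n)), wQ v ≤ d - 1 → v ∈ C := by
    rcases hcase with ⟨-, hdm⟩ | ⟨rfl, -⟩
    · intro v hv hwv
      by_contra hvC
      have := hdm.trans (Nat.sInf_le ⟨v, hv, hvC, rfl⟩)
      omega
    · intro v hv _
      rwa [eq_of_le_of_finrank_le hself (by omega)]
  have hWC : W ≤ C := span_le.2 fun c hc => hc.1
  have key (T : Finset (Fin n)) (hT : T.card ≤ d - 1) :=
    singleton_inequality (hWC.trans hself)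
      (by rw [sympOrtho_span]; exact sympOrtho_antitone fun c hc => hc.1)
      (fun v hv hwv => subset_span ⟨hlow v hv (hwv.trans hT), hwv.trans hT⟩) Ω hcard
      (fun x hx y hy hxy => by have := hdist x hx y hy hxy; omega) w (by rwa [sympOrtho_span])
  have := add_two_mul_le_of_forall_card_le (c := l + k) (e := d - 1)
    (fun T => finrank (ZMod 2) ↥(supportedOn n T ⊓ W))
    (fun T T' h => finrank_mono (inf_le_inf_right W (supportedOn_mono h)))
    (by rcases hcase with ⟨hk1, -⟩ | ⟨-, hl2⟩ <;> omega)
    (fun T hT => by have := key T hT; omega)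
  omega

/-- **Quantum Singleton bound for quotient space quantum codes.**
Let `d ≥ 1`, `n ≡ k (mod 2)`, `l` even, `C ⊆ C^⊥ₛ` with `dim C = n - k`. Assume either
`k ≥ 1` and `d ≤ d_m = min{w_Q(v) : v ∈ C^⊥ₛ \ C}`, or `k = 0` and `l ≥ 2`. If
`Ω ⊆ V ⧸ C^⊥ₛ` has `2^l` cosets, pairwise quotient distances `≥ d`, and all elements of
its cosets lie in one coset of `C(d-1)^⊥ₛ`, then `n ≥ k + l + 2d - 2`. -/
theorem quantum_singleton_bound (n k l d : ℕ) (hn : 0 < n) (hk : k ≤ n) (hd : 1 ≤ d)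
    (hparity : n % 2 = k % 2) (hleven : l % 2 = 0)
    (C : Submodule (ZMod 2) (Vn n)) (hself : C ≤ sympOrtho (C : Set (Vn n)))
    (hC : Module.finrank (ZMod 2) C = n - k)
    (hcase : (1 ≤ k ∧ d ≤ sInf {w | ∃ v : Vn n,
        v ∈ sympOrtho (C : Set (Vn n)) ∧ v ∉ C ∧ wQ v = w}) ∨ (k = 0 ∧ 2 ≤ l))
    (Ω : Set (Vn n ⧸ sympOrtho (C : Set (Vn n)))) (hcard : Nat.card Ω = 2 ^ l)
    (hdist : ∀ x ∈ Ω, ∀ y ∈ Ω, x ≠ y → d ≤ qdist (sympOrtho (C : Set (Vn n))) x y)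
    (hcoset : ∃ w : Vn n, ∀ v : Vn n,
      (Submodule.Quotient.mk v : Vn n ⧸ sympOrtho (C : Set (Vn n))) ∈ Ω →
        v - w ∈ sympOrtho {c : Vn n | c ∈ C ∧ wQ c ≤ d - 1}) :
    k + l + 2 * d ≤ n + 2 :=
  quantum_singleton_bound_general n k l d hk hd C hself hC hcase Ω hcard hdist hcoset
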